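/- (Wirtinger-based integral inequality) Let τ > 0 and x : [t-τ, t] → ℝ be continuous. Define X = ∫_{t-τ}^{t} x(η) dη and Z = (1/τ)∫_{t-τ}^{t} ∫_{η}^{t} x(ζ) dζ dη. Then ∫_{t-τ}^{t} x(η)^2 dη ≥ (1/τ)(X^2 + 3 (X - 2Z)^2). -/

import Mathlib

/-!
Bessel's inequality for the `L²` pairing on `[a, b]` and the first two Legendre polynomials
`1` and `P η = 2η - (a + b)`, which are orthogonal with `‖1‖² = b - a` and `‖P‖² = (b - a)³/3`,
gives `∫ x² ≥ ⟨x, 1⟩²/(b - a) + 3⟨x, P⟩²/(b - a)³`. Integrating by parts, the double integral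
equals `∫ (η - a) x η`, so `⟨x, P⟩ = (b - a)(2Z - X)`.
-/

open Set intervalIntegral

theorem LinearMap.BilinForm.IsSymm.sq_div_add_sq_div_le {M : Type*} [AddCommGroup M]
    [Module ℝ M] {B : LinearMap.BilinForm ℝ M} (hB : B.IsSymm) (hpos : ∀ v, 0 ≤ B v v) {u w : M}
    (huw : B u w = 0) (hu : 0 < B u u) (hw : 0 < B w w) (x : M) :
    B x u ^ 2 / B u u + B x w ^ 2 / B w w ≤ B x x := by
  have hwu : B w u = 0 := hB.isRefl _ _ huw
  have h_expand : B (x - (B x u / B u u) • u - (B x w / B w w) • w)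
      (x - (B x u / B u u) • u - (B x w / B w w) • w)
      = B x x - (B x u ^ 2 / B u u + B x w ^ 2 / B w w) := by
    simp only [map_sub, map_smul, LinearMap.sub_apply, LinearMap.smul_apply, smul_eq_mul,
      hB.eq u x, hB.eq w x, hwu, huw]
    field_simp
    ring
  linarith [hpos (x - (B x u / B u u) • u - (B x w / B w w) • w)]

noncomputable def intervalL2Form (a b : ℝ) : LinearMap.BilinForm ℝ C(ℝ, ℝ) :=
  LinearMap.mk₂ ℝ (fun f g => ∫ η in a..b, f η * g η)
    (fun f₁ f₂ g => by
      simp only [ContinuousMap.add_apply, add_mul]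
      exact integral_add (Continuous.intervalIntegrable (by fun_prop) _ _)
        (Continuous.intervalIntegrable (by fun_prop) _ _))
    (fun c f g => by simp [mul_assoc, integral_const_mul])
    (fun f g₁ g₂ => by
      simp only [ContinuousMap.add_apply, mul_add]
      exact integral_add (Continuous.intervalIntegrable (by fun_prop) _ _)
        (Continuous.intervalIntegrable (by fun_prop) _ _))
    (fun c f g => by simp [mul_left_comm _ c, integral_const_mul])

@[simp]
theorem intervalL2Form_apply (a b : ℝ) (f g : C(ℝ, ℝ)) :
    intervalL2Form a b f g = ∫ η in a..b, f η * g η := rfl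

theorem intervalL2Form_isSymm (a b : ℝ) : (intervalL2Form a b).IsSymm :=
  ⟨fun f g => by simp only [intervalL2Form_apply, mul_comm]⟩

theorem intervalL2Form_self_nonneg {a b : ℝ} (hab : a ≤ b) (f : C(ℝ, ℝ)) :
    0 ≤ intervalL2Form a b f f :=
  integral_nonneg hab fun _ _ => mul_self_nonneg _

theorem integral_integral_eq_integral_sub_mul (a b : ℝ) {f : ℝ → ℝ} (hf : Continuous f) :
    ∫ η in a..b, ∫ ζ in η..b, f ζ = ∫ η in a..b, (η - a) * f η := by
  have hu : ∀ η ∈ uIcc a b, HasDerivAt (fun y => ∫ ζ in y..b, f ζ) (-f η) η := fun η _ =>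
    integral_hasDerivAt_left (hf.intervalIntegrable _ _) (hf.stronglyMeasurableAtFilter _ _)
      hf.continuousAt
  have hv : ∀ η ∈ uIcc a b, HasDerivAt (fun y => y - a) 1 η := fun η _ =>
    (hasDerivAt_id η).sub_const a
  have := integral_mul_deriv_eq_deriv_mul hu hv (hf.neg.intervalIntegrable a b)
    (continuous_const.intervalIntegrable a b)
  simpa [mul_comm] using this

theorem ContinuousOn.exists_continuous_eqOn_Icc {α β : Type*} [LinearOrder α]
    [TopologicalSpace α] [OrderTopology α] [TopologicalSpace β] {a b : α} (hab : a ≤ b)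
    {f : α → β} (hf : ContinuousOn f (Icc a b)) : ∃ g, Continuous g ∧ EqOn g f (Icc a b) :=
  ⟨IccExtend hab ((Icc a b).domRestrict f), hf.domRestrict.Icc_extend',
    fun _ hx => IccExtend_of_mem _ _ hx⟩

theorem wirtinger_integral_inequality_of_continuous {a b : ℝ} (hab : a < b) {f : ℝ → ℝ}
    (hf : Continuous f) :
    (1 / (b - a)) * ((∫ η in a..b, f η) ^ 2
        + 3 * ((∫ η in a..b, f η) - 2 * ((1 / (b - a)) * ∫ η in a..b, ∫ ζ in η..b, f ζ)) ^ 2) ≤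
      ∫ η in a..b, f η ^ 2 := by
  set P : C(ℝ, ℝ) := ⟨fun η => 2 * η - (a + b), by fun_prop⟩
  have h11 : intervalL2Form a b 1 1 = b - a := by simp
  have h1P : intervalL2Form a b 1 P = 0 := by
    simp only [intervalL2Form_apply, ContinuousMap.one_apply, ContinuousMap.coe_mk, one_mul, P]
    rw [integral_comp_mul_sub (fun x => x) two_ne_zero, integral_id, smul_eq_mul]
    ring
  have hPP : intervalL2Form a b P P = (b - a) ^ 3 / 3 := by
    simp only [intervalL2Form_apply, ContinuousMap.coe_mk, ← sq, P]
    rw [integral_comp_mul_sub (fun x => x ^ 2) two_ne_zero, integral_pow, smul_eq_mul]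
    ring
  have hf1 : intervalL2Form a b ⟨f, hf⟩ 1 = ∫ η in a..b, f η := by simp
  have hfP : intervalL2Form a b ⟨f, hf⟩ P
      = 2 * (∫ η in a..b, (η - a) * f η) - (b - a) * ∫ η in a..b, f η := by
    simp only [intervalL2Form_apply, ContinuousMap.coe_mk, P]
    rw [← integral_const_mul, ← integral_const_mul, ← integral_sub
      (Continuous.intervalIntegrable (by fun_prop) _ _)
      (Continuous.intervalIntegrable (by fun_prop) _ _)]
    congr 1
    ext η
    ring
  have hff : intervalL2Form a b ⟨f, hf⟩ ⟨f, hf⟩ = ∫ η in a..b, f η ^ 2 := by simp [sq]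
  have key := (intervalL2Form_isSymm a b).sq_div_add_sq_div_le
    (intervalL2Form_self_nonneg hab.le) h1P (by simpa [h11] using hab)
    (by rw [hPP]; have := sub_pos.2 hab; positivity) ⟨f, hf⟩
  rw [h11, hPP, hf1, hfP, hff] at key
  rw [integral_integral_eq_integral_sub_mul a b hf]
  have hba : b - a ≠ 0 := (sub_pos.2 hab).ne'
  convert key using 1
  field_simp
  ring

theorem wirtinger_integral_inequality (t τ : ℝ) (hτ : 0 < τ) (x : ℝ → ℝ)
    (hx : ContinuousOn x (Set.Icc (t - τ) t)) :
    (1 / τ) * ((∫ η in (t - τ)..t, x η) ^ 2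
        + 3 * ((∫ η in (t - τ)..t, x η)
            - 2 * ((1 / τ) * ∫ η in (t - τ)..t, ∫ ζ in η..t, x ζ)) ^ 2) ≤
      ∫ η in (t - τ)..t, (x η) ^ 2 := by
  have hlt : t - τ < t := sub_lt_self t hτ
  obtain ⟨y, hy, hyx⟩ := hx.exists_continuous_eqOn_Icc hlt.le
  have hxy : ∀ a ∈ Icc (t - τ) t, EqOn x y (uIcc a t) := fun a ha η hη =>
    (hyx (Icc_subset_Icc_left ha.1 (uIcc_of_le ha.2 ▸ hη))).symm
  have hlin : ∫ η in (t - τ)..t, x η = ∫ η in (t - τ)..t, y η :=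
    integral_congr (hxy _ (left_mem_Icc.2 hlt.le))
  have hsq : ∫ η in (t - τ)..t, x η ^ 2 = ∫ η in (t - τ)..t, y η ^ 2 :=
    integral_congr fun η hη => by simp only [hxy _ (left_mem_Icc.2 hlt.le) hη]
  have hdouble : ∫ η in (t - τ)..t, ∫ ζ in η..t, x ζ = ∫ η in (t - τ)..t, ∫ ζ in η..t, y ζ :=
    integral_congr fun η hη => integral_congr (hxy η (uIcc_of_le hlt.le ▸ hη))
  have := wirtinger_integral_inequality_of_continuous hlt hy
  rwa [sub_sub_cancel, ← hlin, ← hsq, ← hdouble] at this
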